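/- Upper incomplete moments of the GLMGA distribution: for all σ > 0, a > 0, b > 0, every real r > 0 with rσ < 1/2, and every u > 0, ∫_u^∞ y^r f_{σ,a,b}(y) dy = [(2b)^{-σr} B(1/2 − rσ, a + rσ)/B(1/2,a)] · I_{1/2−rσ, a+rσ}( u^{-1/σ}/(u^{-1/σ} + 2b) ). -/

import Mathlib

open MeasureTheory Real Filter Topology

/-- The (real) beta function `B(m,n) = ∫_0^1 t^(m-1) (1-t)^(n-1) dt`. -/
noncomputable def betaFn (m n : ℝ) : ℝ :=
  ∫ t in (0:ℝ)..1, t ^ (m - 1) * (1 - t) ^ (n - 1)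

/-- The regularized incomplete beta function `I_{m,n}(v)`. -/
noncomputable def regIncBeta (m n v : ℝ) : ℝ :=
  (∫ t in (0:ℝ)..v, t ^ (m - 1) * (1 - t) ^ (n - 1)) / betaFn m n

/-- The GLMGA density `f_{σ,a,b}`. -/
noncomputable def glmga (σ a b y : ℝ) : ℝ :=
  (2 * b) ^ a / (σ * betaFn a (1 / 2)) * y ^ (-(1 / (2 * σ) + 1))
    / (y ^ (-1 / σ) + 2 * b) ^ (a + 1 / 2)

/-!
The substitution `t = y^(-1/σ) / (y^(-1/σ) + 2b)` is a strictly decreasing bijection of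
`(u, ∞)` onto `(0, t(u))`, with inverse `y = (2bt / (1 - t))^(-σ)`. Under it
`y^r f_{σ,a,b}(y) dy` becomes `(2b)^(-σr) / B(a, 1/2) · t^(-1/2 - rσ) (1 - t)^(a + rσ - 1) dt`,
so the upper incomplete moment is an incomplete beta integral over `(0, t(u))`; finally
`B(a, 1/2) = B(1/2, a)` by `t ↦ 1 - t`.
-/

open Set

lemma intervalIntegrable_betaIntegrand {m n : ℝ} (hm : 0 < m) (hn : 0 < n) :
    IntervalIntegrable (fun t : ℝ => t ^ (m - 1) * (1 - t) ^ (n - 1)) volume 0 1 := by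
  have hleft :
      IntervalIntegrable (fun t : ℝ => t ^ (m - 1) * (1 - t) ^ (n - 1)) volume 0 (1 / 2) := by
    refine (intervalIntegral.intervalIntegrable_rpow' (by linarith)).mul_continuousOn ?_
    rw [uIcc_of_le (by norm_num)]
    exact ContinuousOn.rpow_const (by fun_prop) fun t ht => Or.inl (by linarith [ht.2])
  have hright :
      IntervalIntegrable (fun t : ℝ => t ^ (m - 1) * (1 - t) ^ (n - 1)) volume (1 / 2) 1 := by
    have hsing : IntervalIntegrable (fun t : ℝ => (1 - t) ^ (n - 1)) volume (1 / 2) 1 := by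
      have := (intervalIntegral.intervalIntegrable_rpow' (a := 0) (b := 1 / 2) (r := n - 1)
        (by linarith)).comp_sub_left 1
      norm_num at this
      exact this.symm
    refine hsing.continuousOn_mul ?_
    rw [uIcc_of_le (by norm_num)]
    exact ContinuousOn.rpow_const (by fun_prop) fun t ht => Or.inl (by linarith [ht.1])
  exact hleft.trans hright

lemma betaFn_pos {m n : ℝ} (hm : 0 < m) (hn : 0 < n) : 0 < betaFn m n :=
  intervalIntegral.intervalIntegral_pos_of_pos_on (intervalIntegrable_betaIntegrand hm hn)
    (fun t ht => mul_pos (rpow_pos_of_pos ht.1 _) (rpow_pos_of_pos (by linarith [ht.2]) _))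
    one_pos

lemma betaFn_comm (m n : ℝ) : betaFn m n = betaFn n m := by
  simpa [betaFn, mul_comm] using (intervalIntegral.integral_comp_sub_left
    (fun t : ℝ => t ^ (n - 1) * (1 - t) ^ (m - 1)) 1 (a := 0) (b := 1))

noncomputable def glmgaBetaVar (σ b y : ℝ) : ℝ := y ^ (-1 / σ) / (y ^ (-1 / σ) + 2 * b)

lemma glmgaBetaVar_pos {σ b y : ℝ} (hb : 0 ≤ b) (hy : 0 < y) : 0 < glmgaBetaVar σ b y :=
  div_pos (rpow_pos_of_pos hy _) (by positivity)

lemma strictAntiOn_glmgaBetaVar {σ b : ℝ} (hσ : 0 < σ) (hb : 0 < b) :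
    StrictAntiOn (glmgaBetaVar σ b) (Ioi 0) := by
  intro x hx y _ hxy
  have hsx : 0 < y ^ (-1 / σ) := rpow_pos_of_pos (hx.out.trans hxy) _
  have hs : y ^ (-1 / σ) < x ^ (-1 / σ) :=
    rpow_lt_rpow_of_neg hx hxy (div_neg_of_neg_of_pos (by norm_num) hσ)
  rw [glmgaBetaVar, glmgaBetaVar, div_lt_div_iff₀ (by positivity) (by linarith)]
  nlinarith

lemma glmgaBetaVar_rpow_neg {σ b t : ℝ} (hσ : σ ≠ 0) (hb : 0 < b) (ht₀ : 0 < t)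
    (ht₁ : t < 1) :
    glmgaBetaVar σ b ((2 * b * t / (1 - t)) ^ (-σ)) = t := by
  have hw : 0 < 2 * b * t / (1 - t) := div_pos (by positivity) (by linarith)
  rw [glmgaBetaVar, ← rpow_mul hw.le, show -σ * (-1 / σ) = 1 by field_simp, rpow_one]
  have : 1 - t ≠ 0 := by linarith
  field_simp
  ring

lemma glmgaBetaVar_image_Ioi {σ b u : ℝ} (hσ : 0 < σ) (hb : 0 < b) (hu : 0 < u) :
    glmgaBetaVar σ b '' Ioi u = Ioo 0 (glmgaBetaVar σ b u) := by
  have hanti := strictAntiOn_glmgaBetaVar hσ hb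
  ext t
  constructor
  · rintro ⟨y, hy, rfl⟩
    exact ⟨glmgaBetaVar_pos hb.le (hu.trans hy), hanti hu (hu.trans hy) hy⟩
  · rintro ⟨ht₀, htu⟩
    have ht₁ : t < 1 := htu.trans (div_lt_one (by positivity) |>.2 (by linarith))
    refine ⟨(2 * b * t / (1 - t)) ^ (-σ), ?_, glmgaBetaVar_rpow_neg hσ.ne' hb ht₀ ht₁⟩
    have hy : 0 < (2 * b * t / (1 - t)) ^ (-σ) :=
      rpow_pos_of_pos (div_pos (by positivity) (by linarith)) _
    rw [mem_Ioi, ← hanti.lt_iff_gt hy hu, glmgaBetaVar_rpow_neg hσ.ne' hb ht₀ ht₁]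
    exact htu

lemma hasDerivAt_glmgaBetaVar {σ b y : ℝ} (hb : 0 ≤ b) (hy : 0 < y) :
    HasDerivAt (glmgaBetaVar σ b)
      (2 * b * (-1 / σ * y ^ (-1 / σ - 1)) / (y ^ (-1 / σ) + 2 * b) ^ 2) y := by
  have hs : HasDerivAt (fun y : ℝ => y ^ (-1 / σ)) (-1 / σ * y ^ (-1 / σ - 1)) y :=
    hasDerivAt_rpow_const (Or.inl hy.ne')
  have hpos : 0 < y ^ (-1 / σ) + 2 * b := by positivity
  exact (hs.div (hs.add_const (2 * b)) hpos.ne').congr_deriv (by ring)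

lemma intervalIntegral_glmgaBetaVar {E : Type*} [NormedAddCommGroup E] [NormedSpace ℝ E]
    {σ b u : ℝ} (hσ : 0 < σ) (hb : 0 < b) (hu : 0 < u) (F : ℝ → E) :
    ∫ t in (0)..glmgaBetaVar σ b u, F t
      = ∫ y in Ioi u, |deriv (glmgaBetaVar σ b) y| • F (glmgaBetaVar σ b y) := by
  rw [intervalIntegral.integral_of_le (glmgaBetaVar_pos hb.le hu).le,
    integral_Ioc_eq_integral_Ioo, ← glmgaBetaVar_image_Ioi hσ hb hu]
  exact integral_image_eq_integral_abs_deriv_smul measurableSet_Ioi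
    (fun y hy => (hasDerivAt_glmgaBetaVar hb.le (hu.trans hy)).differentiableAt.hasDerivAt
      |>.hasDerivWithinAt)
    ((strictAntiOn_glmgaBetaVar hσ hb).injOn.mono (Ioi_subset_Ioi hu.le)) F

lemma abs_deriv_glmgaBetaVar_mul_betaIntegrand {σ a b r y : ℝ} (hσ : 0 < σ) (hb : 0 < b)
    (hy : 0 < y) :
    |deriv (glmgaBetaVar σ b) y| *
      ((2 * b) ^ (-(σ * r)) / betaFn a (1 / 2) *
        (glmgaBetaVar σ b y ^ (1 / 2 - r * σ - 1) * (1 - glmgaBetaVar σ b y) ^ (a + r * σ - 1)))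
      = y ^ r * glmga σ a b y := by
  have h2b : 0 < 2 * b := by positivity
  have hw : 0 < y ^ (-1 / σ) + 2 * b := by positivity
  have habs : |deriv (glmgaBetaVar σ b) y|
      = 2 * b * y ^ (-1 / σ - 1) / (y ^ (-1 / σ) + 2 * b) ^ 2 / σ := by
    have hσ' : -1 / σ < 0 := div_neg_of_neg_of_pos (by norm_num) hσ
    rw [(hasDerivAt_glmgaBetaVar hb.le hy).deriv, abs_of_neg (div_neg_of_neg_of_pos
      (mul_neg_of_pos_of_neg h2b (mul_neg_of_neg_of_pos hσ' (rpow_pos_of_pos hy _)))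
      (by positivity))]
    ring
  have hg : 1 - glmgaBetaVar σ b y = 2 * b / (y ^ (-1 / σ) + 2 * b) := by
    rw [glmgaBetaVar]; field_simp; ring
  have hpowers : 2 * b * y ^ (-1 / σ - 1) / (y ^ (-1 / σ) + 2 * b) ^ 2 * ((2 * b) ^ (-(σ * r)) *
      ((y ^ (-1 / σ) / (y ^ (-1 / σ) + 2 * b)) ^ (1 / 2 - r * σ - 1) *
        (2 * b / (y ^ (-1 / σ) + 2 * b)) ^ (a + r * σ - 1)))
      = (2 * b) ^ a * (y ^ r * y ^ (-(1 / (2 * σ) + 1)))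
        / (y ^ (-1 / σ) + 2 * b) ^ (a + 1 / 2) := by
    rw [div_rpow (rpow_pos_of_pos hy _).le hw.le, div_rpow h2b.le hw.le, ← rpow_mul hy.le,
      ← rpow_natCast]
    generalize y ^ (-1 / σ) + 2 * b = w at hw ⊢
    -- all factors are now powers of `2b`, `y`, `w`, so it suffices to compare exponents
    rw [← exp_log h2b, ← exp_log hy, ← exp_log hw]
    simp only [← exp_mul, div_eq_mul_inv, ← exp_neg, ← exp_add]
    congr 1
    field_simp
    ring
  rw [habs, hg, glmga, glmgaBetaVar]
  linear_combination hpowers / (σ * betaFn a (1 / 2))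

/-- upper incomplete moments of the GLMGA distribution. -/
theorem glmga_upper_incomplete_moment (σ a b r u : ℝ) (hσ : 0 < σ) (ha : 0 < a)
    (hb : 0 < b) (hr : 0 < r) (hrσ : r * σ < 1 / 2) (hu : 0 < u) :
    ∫ y in Set.Ioi u, y ^ r * glmga σ a b y
      = (2 * b) ^ (-(σ * r)) * betaFn (1 / 2 - r * σ) (a + r * σ) / betaFn (1 / 2) a *
        regIncBeta (1 / 2 - r * σ) (a + r * σ)
          (u ^ (-1 / σ) / (u ^ (-1 / σ) + 2 * b)) := by
  have hB : betaFn (1 / 2 - r * σ) (a + r * σ) ≠ 0 :=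
    (betaFn_pos (by linarith) (by positivity)).ne'
  calc ∫ y in Ioi u, y ^ r * glmga σ a b y
      = ∫ y in Ioi u, |deriv (glmgaBetaVar σ b) y| •
          ((2 * b) ^ (-(σ * r)) / betaFn a (1 / 2) * (glmgaBetaVar σ b y ^ (1 / 2 - r * σ - 1) *
            (1 - glmgaBetaVar σ b y) ^ (a + r * σ - 1))) :=
        setIntegral_congr_fun measurableSet_Ioi fun y hy =>
          (abs_deriv_glmgaBetaVar_mul_betaIntegrand hσ hb (hu.trans hy)).symm
    _ = (2 * b) ^ (-(σ * r)) / betaFn a (1 / 2) * ∫ t in (0)..glmgaBetaVar σ b u,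
          t ^ (1 / 2 - r * σ - 1) * (1 - t) ^ (a + r * σ - 1) := by
        rw [← intervalIntegral.integral_const_mul, intervalIntegral_glmgaBetaVar hσ hb hu]
    _ = _ := by
        rw [regIncBeta, betaFn_comm a, glmgaBetaVar, mul_div_assoc, mul_assoc,
          div_mul_div_cancel₀' hB, ← mul_div_assoc, div_mul_eq_mul_div]
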